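/- T₀(Π) is a generator program for Π: (1) for every worldview W of Π there is a stable model M of T₀(Π) with k(W) = k(M) and (M ∩ At(Π)) ∈ W; and (2) for every stable model M of T₀(Π) and every set of interpretations W with k(W) = k(M), the set M ∩ At(Π) is a stable model of the subjective reduct Π^W. -/

import Mathlib

/-! Framework for (epistemic) logic programs:
objective literals, rules, programs, reducts, stable models,
subjective literals, subjective reducts, worldviews, and the
generate-and-test programs T₀, G₀, kp, G₁. -/

/-- Extended objective literals over an atom type `α`:
an atom, a negated atom, a doubly negated atom, or a truth constant. -/
inductive Lit (α : Type) : Type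
  | pos (a : α)
  | neg (a : α)
  | nneg (a : α)
  | top
  | bot

namespace Lit

/-- Satisfaction of an extended objective literal by an interpretation. -/
def sat {α : Type} (I : Set α) : Lit α → Prop
  | .pos a => a ∈ I
  | .neg a => a ∉ I
  | .nneg a => a ∈ I
  | .top => True
  | .bot => False

/-- A literal is negated if it is of the form `¬a` or `¬¬a`. -/
def isNeg {α : Type} : Lit α → Prop
  | .neg _ => True
  | .nneg _ => True
  | _ => False

/-- Rename atoms in a literal. -/
def map {α β : Type} (f : α → β) : Lit α → Lit β
  | .pos a => .pos (f a)
  | .neg a => .neg (f a)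
  | .nneg a => .nneg (f a)
  | .top => .top
  | .bot => .bot

/-- The atoms occurring in a literal. -/
def atoms {α : Type} : Lit α → Set α
  | .pos a => {a}
  | .neg a => {a}
  | .nneg a => {a}
  | _ => ∅

end Lit

/-- An objective rule `a₁ ∨ ... ∨ aₙ ← L₁,...,Lₘ`. -/
structure Rule (α : Type) where
  head : Set α
  body : Set (Lit α)

/-- An objective program: a set of rules. -/
abbrev Program (α : Type) := Set (Rule α)

/-- A rule is satisfied by `I` if `I` satisfies some head atom
whenever it satisfies all body literals. -/
def Rule.sat {α : Type} (I : Set α) (r : Rule α) : Prop :=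
  (∀ L ∈ r.body, L.sat I) → ∃ a ∈ r.head, a ∈ I

/-- A model of a program satisfies all its rules. -/
def isModel {α : Type} (I : Set α) (P : Program α) : Prop := ∀ r ∈ P, r.sat I

/-- The reduct of a program with respect to `I`: drop rules with an unsatisfied
negated body literal; delete negated literals from the remaining rules. -/
def reduct {α : Type} (P : Program α) (I : Set α) : Program α :=
  { r' | ∃ r ∈ P, (∀ L ∈ r.body, L.isNeg → L.sat I) ∧
      r' = ⟨r.head, {L | L ∈ r.body ∧ ¬ L.isNeg}⟩ }

/-- `I` is a stable model of `P` iff it is a ⊆-minimal model of the reduct `P^I`. -/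
def isStable {α : Type} (P : Program α) (I : Set α) : Prop :=
  isModel I (reduct P I) ∧ ∀ J ⊆ I, isModel J (reduct P I) → J = I

/-- The set of stable models of a program. -/
def SM {α : Type} (P : Program α) : Set (Set α) := { I | isStable P I }

/-- A program extended with assumption constraints `⊥ ← ¬a` (for `a ∈ Apos`)
and `⊥ ← a` (for `a ∈ Aneg`). -/
def withAssumption {α : Type} (P : Program α) (Apos Aneg : Set α) : Program α :=
  P ∪ ((fun a => (⟨∅, {Lit.neg a}⟩ : Rule α)) '' Apos)
    ∪ ((fun a => (⟨∅, {Lit.pos a}⟩ : Rule α)) '' Aneg)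

/-- Stable models of `P` under an assumption. -/
def SMA {α : Type} (P : Program α) (Apos Aneg : Set α) : Set (Set α) :=
  SM (withAssumption P Apos Aneg)

/-- Literals of epistemic programs: an objective literal, or a subjective
atom `K l` preceded by zero, one, or two negations. -/
inductive SLit (α : Type) : Type
  | obj (l : Lit α)
  | k (l : Lit α)
  | nk (l : Lit α)
  | nnk (l : Lit α)

/-- An epistemic rule. -/
structure ERule (α : Type) where
  head : Set α
  body : Set (SLit α)

/-- An epistemic program: a set of epistemic rules. -/
abbrev EProgram (α : Type) := Set (ERule α)

/-- `W ⊨ K l`: every interpretation in `W` satisfies `l`. -/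
def satK {α : Type} (W : Set (Set α)) (l : Lit α) : Prop := ∀ I ∈ W, l.sat I

open scoped Classical in
/-- Replace a subjective literal by `⊤`/`⊥` according to `W`; objective
literals are unchanged. -/
noncomputable def SLit.reduce {α : Type} (W : Set (Set α)) : SLit α → Lit α
  | .obj l => l
  | .k l => if satK W l then .top else .bot
  | .nk l => if satK W l then .bot else .top
  | .nnk l => if satK W l then .top else .bot

/-- The subjective reduct `P^W`. -/
noncomputable def subjReduct {α : Type} (P : EProgram α) (W : Set (Set α)) : Program α :=
  (fun r : ERule α => (⟨r.head, (SLit.reduce W) '' r.body⟩ : Rule α)) '' P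

/-- A worldview: a non-empty set of interpretations `W` with `W = SM(P^W)`. -/
def isWorldview {α : Type} (P : EProgram α) (W : Set (Set α)) : Prop :=
  W.Nonempty ∧ W = SM (subjReduct P W)

/-- Normal-form subjective literals: `K a`, `¬K a`, `¬¬K a` with `a` an atom. -/
def SLit.isNormal {α : Type} : SLit α → Prop
  | .obj _ => True
  | .k (.pos _) => True
  | .nk (.pos _) => True
  | .nnk (.pos _) => True
  | _ => False

/-- A program is in normal form if negation does not occur in the scope of `K`. -/
def isNormalForm {α : Type} (P : EProgram α) : Prop :=
  ∀ r ∈ P, ∀ L ∈ r.body, L.isNormal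

/-- The atoms `a` such that a subjective atom `K a` occurs in the program; the
corresponding fresh atoms `ka` are represented as `Sum.inr a`. -/
def KAtoms {α : Type} (P : EProgram α) : Set α :=
  { a | ∃ r ∈ P, SLit.k (Lit.pos a) ∈ r.body ∨ SLit.nk (Lit.pos a) ∈ r.body ∨
        SLit.nnk (Lit.pos a) ∈ r.body }

/-- Replace subjective literals on `K a` by objective literals on the fresh
atom `ka = Sum.inr a`; original atoms become `Sum.inl a`. -/
def SLit.t0 {α : Type} : SLit α → Lit (α ⊕ α)
  | .obj l => l.map Sum.inl
  | .k (.pos a) => .pos (Sum.inr a)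
  | .nk (.pos a) => .neg (Sum.inr a)
  | .nnk (.pos a) => .nneg (Sum.inr a)
  | _ => .bot

/-- The tester program `T₀(P)`: `k(P)` plus a choice rule `{ka}`
(i.e. `ka ← ¬¬ka`) for each `ka ∈ K(P)`. -/
def T0 {α : Type} (P : EProgram α) : Program (α ⊕ α) :=
  ((fun r : ERule α => (⟨Sum.inl '' r.head, SLit.t0 '' r.body⟩ : Rule (α ⊕ α))) '' P)
  ∪ ((fun a => (⟨{Sum.inr a}, {Lit.nneg (Sum.inr a)}⟩ : Rule (α ⊕ α))) '' KAtoms P)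

/-- The generator program `G₀(P)`: `T₀(P)` plus consistency constraints
`⊥ ← ka, ¬a` for each `ka ∈ K(P)`. -/
def G0 {α : Type} (P : EProgram α) : Program (α ⊕ α) :=
  T0 P ∪ ((fun a => (⟨∅, {Lit.pos (Sum.inr a), Lit.neg (Sum.inl a)}⟩ : Rule (α ⊕ α))) '' KAtoms P)

/-- `k(M) = M ∩ K(P)`, read as a set of original atoms. -/
def kOfM {α : Type} (M : Set (α ⊕ α)) : Set α := { a | Sum.inr a ∈ M }

/-- `k(W) = {ka ∈ K(P) : W ⊨ K a}`, read as a set of original atoms. -/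
def kOfW {α : Type} (P : EProgram α) (W : Set (Set α)) : Set α :=
  { a | a ∈ KAtoms P ∧ ∀ I ∈ W, a ∈ I }

/-- Restriction of an interpretation to the original atoms `At(P)`. -/
def restr {α : Type} (M : Set (α ⊕ α)) : Set α := { a | Sum.inl a ∈ M }

/-- The positive part of the assumption determined by a set `S` of K-atoms:
`ka` for each `ka ∈ K(P)` with `a ∈ S`. -/
def asmP {α : Type} (P : EProgram α) (S : Set α) : Set (α ⊕ α) := Sum.inr '' (S ∩ KAtoms P)

/-- The negative part of the assumption determined by a set `S` of K-atoms:
`¬ka` for each `ka ∈ K(P)` with `a ∉ S`. -/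
def asmN {α : Type} (P : EProgram α) (S : Set α) : Set (α ⊕ α) := Sum.inr '' (KAtoms P \ S)

/-- A generator program for `P`. -/
def isGenerator {α : Type} (P : EProgram α) (G : Program (α ⊕ α)) : Prop :=
  (∀ W, isWorldview P W → ∃ M ∈ SM G, kOfM M = kOfW P W ∧ restr M ∈ W) ∧
  (∀ M ∈ SM G, ∀ W : Set (Set α), kOfW P W = kOfM M → restr M ∈ SM (subjReduct P W))

/-- A tester program for `P`: a non-empty `W` is a worldview of `P` iff
`W` equals the restriction to `At(P)` of `SM(T; k(W))`. -/
def isTester {α : Type} (P : EProgram α) (T : Program (α ⊕ α)) : Prop :=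
  ∀ W : Set (Set α), W.Nonempty →
    (isWorldview P W ↔ W = restr '' SMA T (asmP P (kOfW P W)) (asmN P (kOfW P W)))

/-- Atoms of the extended signature for the propagation program: original
atoms and `ka`-atoms (left) plus fresh atoms `kp_a`, `kn_a`, `kn_r` (right). -/
abbrev PExt (α : Type) : Type := (α ⊕ α) ⊕ (α ⊕ (α ⊕ ERule α))

/-- An original atom `a` in the extended signature. -/
def aE {α : Type} (a : α) : PExt α := Sum.inl (Sum.inl a)

/-- The atom `ka` in the extended signature. -/
def kaE {α : Type} (a : α) : PExt α := Sum.inl (Sum.inr a)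

/-- The fresh propagation atom `kp_a`. -/
def kpA {α : Type} (a : α) : PExt α := Sum.inr (Sum.inl a)

/-- The fresh propagation atom `kn_a`. -/
def knA {α : Type} (a : α) : PExt α := Sum.inr (Sum.inr (Sum.inl a))

/-- The fresh propagation atom `kn_r` for a rule `r`. -/
def knR {α : Type} (r : ERule α) : PExt α := Sum.inr (Sum.inr (Sum.inr r))

/-- Translation of a body literal for the rules defining `kp_a`. -/
def SLit.kpBody {α : Type} : SLit α → Lit (PExt α)
  | .obj (.pos a) => .pos (kpA a)
  | .obj (.neg a) => .pos (knA a)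
  | .k (.pos a) => .pos (kaE a)
  | .nk (.pos a) => .neg (kaE a)
  | .nnk (.pos a) => .nneg (kaE a)
  | _ => .bot

/-- Translation of a body literal for the rules defining `kn_r`
(the "complement" of the literal). -/
def SLit.knBody {α : Type} : SLit α → Lit (PExt α)
  | .obj (.pos a) => .pos (knA a)
  | .obj (.neg a) => .pos (kpA a)
  | .k (.pos a) => .neg (kaE a)
  | .nk (.pos a) => .pos (kaE a)
  | .nnk (.pos a) => .neg (kaE a)
  | _ => .top

/-- The atoms occurring in a subjective literal. -/
def SLit.atoms {α : Type} : SLit α → Set α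
  | .obj l => l.atoms
  | .k l => l.atoms
  | .nk l => l.atoms
  | .nnk l => l.atoms

/-- The atoms occurring in an epistemic program. -/
def AtE {α : Type} (P : EProgram α) : Set α :=
  { a | ∃ r ∈ P, a ∈ r.head ∨ ∃ L ∈ r.body, a ∈ L.atoms }

/-- The epistemic-propagation program `kp(P)`:
rules `kp_{a} ← ...` for single-atom-head rules, rules `kn_r ← ...` for all
rules, and completion rules `kn_a ← kn_{r₁},...,kn_{rₖ}`. -/
def kpProg {α : Type} (P : EProgram α) : Program (PExt α) :=
  { r' | ∃ r ∈ P, ∃ a : α, r.head = {a} ∧ r' = ⟨{kpA a}, SLit.kpBody '' r.body⟩ }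
  ∪ { r' | ∃ r ∈ P, ∃ L ∈ r.body, r' = ⟨{knR r}, {L.knBody}⟩ }
  ∪ { r' | ∃ a ∈ AtE P,
        r' = ⟨{knA a}, (fun r => Lit.pos (knR r)) '' { r ∈ P | a ∈ r.head }⟩ }

/-- Rename the atoms of a rule. -/
def Rule.mapAtoms {α β : Type} (f : α → β) (r : Rule α) : Rule β :=
  ⟨f '' r.head, (Lit.map f) '' r.body⟩

/-- `G₀(P)` viewed over the extended signature. -/
def G0ext {α : Type} (P : EProgram α) : Program (PExt α) :=
  (Rule.mapAtoms Sum.inl) '' (G0 P)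

/-- The generator program `G₁(P)`: `G₀(P)` together with the propagation
program `kp(P)` and consistency constraints `⊥ ← kp_a, ¬ka`. -/
def G1 {α : Type} (P : EProgram α) : Program (PExt α) :=
  G0ext P ∪ kpProg P
  ∪ { r' | ∃ a ∈ KAtoms P, r' = ⟨∅, {Lit.pos (kpA a), Lit.neg (kaE a)}⟩ }

/-! Write `I ∪ S` for the interpretation of `T₀(Π)` with original atoms `I` and `ka`-atoms `S`.
If `S` decides every `K a` the way `W` does, i.e. `S = k(W)`, then rule by rule the reduct of
`T₀(Π)` with respect to `I ∪ S`, evaluated in `J ∪ S`, is the reduct of `Π^W` with respect to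
`I`, evaluated in `J`: the atom `ka` is read off `S` exactly as the subjective reduct reads `K a`
off `W`. The choice rules `ka ← ¬¬ka` hold trivially there, yet they force `S` into every model of
that reduct; so minimal models correspond as well, and the stable models of `T₀(Π)` with
`k`-part `k(W)` are exactly the `I ∪ k(W)` with `I ∈ SM(Π^W)`. Both halves of the theorem are
read off this correspondence. -/

def sumOf {α : Type} (I S : Set α) : Set (α ⊕ α) := Sum.inl '' I ∪ Sum.inr '' S

section SumOf

variable {α : Type}

@[simp]
lemma inl_mem_sumOf {I S : Set α} {a : α} : Sum.inl a ∈ sumOf I S ↔ a ∈ I := by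
  simp [sumOf]

@[simp]
lemma inr_mem_sumOf {I S : Set α} {a : α} : Sum.inr a ∈ sumOf I S ↔ a ∈ S := by
  simp [sumOf]

@[simp]
lemma restr_sumOf (I S : Set α) : restr (sumOf I S) = I := by
  ext; simp [restr]

@[simp]
lemma kOfM_sumOf (I S : Set α) : kOfM (sumOf I S) = S := by
  ext; simp [kOfM]

lemma sumOf_restr_kOfM (M : Set (α ⊕ α)) : sumOf (restr M) (kOfM M) = M := by
  ext (a | a) <;> simp [restr, kOfM]

lemma sumOf_subset_sumOf_iff {I J S T : Set α} : sumOf I S ⊆ sumOf J T ↔ I ⊆ J ∧ S ⊆ T := by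
  simp [sumOf, Set.image_subset_iff, Set.preimage_union,
    Set.preimage_image_eq _ Sum.inl_injective, Set.preimage_image_eq _ Sum.inr_injective]

end SumOf

def Lit.satReduct {α : Type} (I J : Set α) (L : Lit α) : Prop :=
  (L.isNeg → L.sat I) ∧ (¬ L.isNeg → L.sat J)

lemma isModel_reduct_iff {α : Type} {P : Program α} {I J : Set α} :
    isModel J (reduct P I) ↔
      ∀ r ∈ P, (∀ L ∈ r.body, L.satReduct I J) → ∃ a ∈ r.head, a ∈ J := by
  constructor
  · intro h r hr hbody
    exact h ⟨r.head, {L | L ∈ r.body ∧ ¬ L.isNeg}⟩ ⟨r, hr, fun L hL => (hbody L hL).1, rfl⟩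
      fun L hL => (hbody L hL.1).2 hL.2
  · rintro h _ ⟨r, hr, hneg, rfl⟩ hpos
    exact h r hr fun L hL => ⟨hneg L hL, fun hn => hpos L ⟨hL, hn⟩⟩

section T0

variable {α : Type} {P : EProgram α} {W : Set (Set α)} {S : Set α}

lemma satK_pos_iff_mem_kOfW {a : α} (ha : a ∈ KAtoms P) :
    satK W (.pos a) ↔ a ∈ kOfW P W :=
  ⟨fun h => ⟨ha, h⟩, fun h => h.2⟩

lemma satReduct_t0_iff (hnf : isNormalForm P)
    (hS : ∀ a ∈ KAtoms P, satK W (.pos a) ↔ a ∈ S) {r : ERule α} (hr : r ∈ P)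
    {L : SLit α} (hL : L ∈ r.body) (I J : Set α) :
    (SLit.t0 L).satReduct (sumOf I S) (sumOf J S) ↔ (SLit.reduce W L).satReduct I J := by
  have hnorm := hnf r hr L hL
  rcases L with (l | l | l | l) <;> cases l <;> simp only [SLit.isNormal] at hnorm
  all_goals first
    | simp [SLit.t0, SLit.reduce, Lit.map, Lit.satReduct, Lit.isNeg, Lit.sat]; done
    | rename_i a
      have hKa : a ∈ KAtoms P := ⟨r, hr, by simp [hL]⟩
      by_cases hW : satK W (.pos a) <;>
        simp [SLit.t0, SLit.reduce, Lit.satReduct, Lit.isNeg, Lit.sat, hW, ← hS a hKa]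

lemma isModel_reduct_T0_iff (hnf : isNormalForm P)
    (hS : ∀ a ∈ KAtoms P, satK W (.pos a) ↔ a ∈ S) (I J : Set α) :
    isModel (sumOf J S) (reduct (T0 P) (sumOf I S))
      ↔ isModel J (reduct (subjReduct P W) I) := by
  simp only [isModel_reduct_iff, T0, subjReduct, Set.mem_union, or_imp, forall_and,
    Set.forall_mem_image]
  -- the choice rules hold: `ka` is read off `S` both in the body and in the head
  have hchoice : ∀ a ∈ KAtoms P, (∀ L ∈ ({Lit.nneg (Sum.inr a)} : Set (Lit (α ⊕ α))),
      L.satReduct (sumOf I S) (sumOf J S)) → ∃ x ∈ ({Sum.inr a} : Set (α ⊕ α)), x ∈ sumOf J S := by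
    intro a _ h
    simpa [Lit.satReduct, Lit.isNeg, Lit.sat] using h _ rfl
  rw [and_iff_left hchoice]
  refine forall₂_congr fun r hr => ?_
  simp only [Set.exists_mem_image, inl_mem_sumOf]
  exact imp_congr_left (forall₂_congr fun L hL => satReduct_t0_iff hnf hS hr hL I J)

lemma image_inr_subset_of_isModel_reduct_T0 {I : Set α} {M : Set (α ⊕ α)}
    (hM : isModel M (reduct (T0 P) (sumOf I S))) : Sum.inr '' (S ∩ KAtoms P) ⊆ M := by
  rintro _ ⟨a, ⟨haS, haK⟩, rfl⟩
  have := (isModel_reduct_iff.1 hM) _ (Or.inr ⟨a, haK, rfl⟩)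
  simpa [Lit.satReduct, Lit.isNeg, Lit.sat, haS] using this

lemma isStable_T0_iff (hnf : isNormalForm P) (I : Set α) :
    isStable (T0 P) (sumOf I (kOfW P W)) ↔ isStable (subjReduct P W) I := by
  have hS : ∀ a ∈ KAtoms P, satK W (.pos a) ↔ a ∈ kOfW P W := fun _ => satK_pos_iff_mem_kOfW
  unfold isStable
  rw [isModel_reduct_T0_iff hnf hS]
  refine and_congr_right fun _ => ⟨fun hmin J hJI hJ => ?_, fun hmin M hMI hM => ?_⟩
  · have := hmin (sumOf J (kOfW P W)) (sumOf_subset_sumOf_iff.2 ⟨hJI, subset_rfl⟩)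
      ((isModel_reduct_T0_iff hnf hS I J).2 hJ)
    simpa using congrArg restr this
  · rw [← sumOf_restr_kOfM M] at hMI hM ⊢
    obtain ⟨hMI, hkM⟩ := sumOf_subset_sumOf_iff.1 hMI
    have hk : kOfM M = kOfW P W := hkM.antisymm fun a ha => by
      simpa using image_inr_subset_of_isModel_reduct_T0 hM ⟨a, ⟨ha, ha.1⟩, rfl⟩
    rw [hk] at hM ⊢
    rw [hmin _ hMI ((isModel_reduct_T0_iff hnf hS I _).1 hM)]

end T0

theorem T0_is_generator_general {α : Type} (P : EProgram α)
    (hnf : isNormalForm P) :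
    (∀ W : Set (Set α), isWorldview P W →
        ∃ M ∈ SM (T0 P), kOfM M = kOfW P W ∧ restr M ∈ W)
    ∧ (∀ M ∈ SM (T0 P), ∀ W : Set (Set α),
        kOfW P W = kOfM M → restr M ∈ SM (subjReduct P W)) := by
  refine ⟨fun W ⟨⟨I, hIW⟩, hW⟩ => ?_, fun M hM W hk => ?_⟩
  · have hI : isStable (subjReduct P W) I := by rw [hW] at hIW; exact hIW
    exact ⟨sumOf I (kOfW P W), (isStable_T0_iff hnf I).2 hI, kOfM_sumOf _ _,
      by rwa [restr_sumOf]⟩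
  · rw [← sumOf_restr_kOfM M, ← hk] at hM
    exact (isStable_T0_iff hnf (restr M)).1 hM

/-- `T₀(Π)` is a generator program for `Π`. -/
theorem T0_is_generator {α : Type} (P : EProgram α) (hfin : P.Finite)
    (hnf : isNormalForm P) :
    (∀ W : Set (Set α), isWorldview P W →
        ∃ M ∈ SM (T0 P), kOfM M = kOfW P W ∧ restr M ∈ W)
    ∧ (∀ M ∈ SM (T0 P), ∀ W : Set (Set α),
        kOfW P W = kOfM M → restr M ∈ SM (subjReduct P W)) :=
  T0_is_generator_general P hnf
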